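/- Let z_1,…,z_n be distinct complex numbers and m_1,…,m_n positive integers. Let f,g ∈ ℂ[x] be monic polynomials of degrees l̃ and l respectively with l̃ > l ≥ 0, such that for each s at least one of f(z_s), g(z_s) is nonzero and f'g − fg' = (l̃ − l)·∏_{s=1}^n (x−z_s)^{m_s}. Then there exists a unique h ∈ ℂ^n such that T_h(f) = 0 and T_h(g) = 0; moreover this h satisfies ∑_s h_s = 0 and ∑_s z_s h_s = l·l̃. -/

import Mathlib

noncomputable section

/-- The polynomial form `T_h` of the differential operator
`d²/dx² − ∑_s m_s/(x−z_s)·d/dx + ∑_s h_s/(x−z_s)`. -/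
def Tpoly {n : ℕ} (z m h : Fin n → ℂ) (p : Polynomial ℂ) : Polynomial ℂ :=
  (∏ s, (Polynomial.X - Polynomial.C (z s))) *
      Polynomial.derivative (Polynomial.derivative p)
    - (∑ s, Polynomial.C (m s) *
        ∏ r ∈ Finset.univ.erase s, (Polynomial.X - Polynomial.C (z r))) *
      Polynomial.derivative p
    + (∑ s, Polynomial.C (h s) *
        ∏ r ∈ Finset.univ.erase s, (Polynomial.X - Polynomial.C (z r))) * p

/-- The pair (m; l) is separating. -/
def Separating {n : ℕ} (m : Fin n → ℂ) (l : ℕ) : Prop :=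
  ∀ i : ℕ, 1 ≤ i → i ≤ l → (∑ s, m s) - 2 * l + 1 + i ≠ 0

end

/-!
Write `P = ∏ (x - z_s)` and `B_e = ∑ e_s ∏_{r ≠ s} (x - z_r)` for `e ∈ ℂⁿ`, so that
`T_h p = T_0 p + B_h p`. Differentiating the Wronskian identity and using `P W' = B_m W` for
`W = ∏ (x - z_s)^{m_s}` gives `T_0 f · g = T_0 g · f`. As `f` and `g` have no common root,
`T_0 f = f H` and `T_0 g = g H` for one polynomial `H` of degree `< n`, hence
`T_h f = 0 ↔ B_h = -H ↔ T_h g = 0`, and `e ↦ B_e` is a bijection from `ℂⁿ` onto the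
polynomials of degree `< n` (interpolation at the `z_s`).

For the sums, the two top coefficients of `T_h p = 0`, `p` monic of degree `k`, give `∑ h_s = 0`
and the indicial equation at infinity `k (k - 1) - (∑ m_s) k + ∑ z_s h_s = 0`. Its roots
`l̃ ≠ l` have product `∑ z_s h_s`.
-/

open Polynomial Finset

namespace Polynomial

variable {R : Type*}

theorem coeff_X_mul_derivative [CommSemiring R] (p : R[X]) (j : ℕ) :
    (X * derivative p).coeff j = j * p.coeff j := by
  cases j with
  | zero => simp
  | succ j => rw [coeff_X_mul, coeff_derivative, mul_comm, Nat.cast_succ]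

theorem coeff_X_sq_mul_derivative_derivative [CommRing R] (p : R[X]) (j : ℕ) :
    (X ^ 2 * derivative (derivative p)).coeff j = j * (j - 1) * p.coeff j := by
  have euler : X ^ 2 * derivative (derivative p) =
      X * derivative (X * derivative p) - X * derivative p := by
    rw [derivative_mul, derivative_X]
    ring
  rw [euler, coeff_sub, coeff_X_mul_derivative, coeff_X_mul_derivative]
  ring

theorem Monic.coeff_eq_zero_of_natDegree_mul_lt [Semiring R] {P Q : R[X]} (hP : P.Monic)
    {k j : ℕ} (hPQ : (P * Q).natDegree < P.natDegree + k) (hj : k ≤ j) : Q.coeff j = 0 := by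
  rcases eq_or_ne Q 0 with rfl | hQ
  · exact coeff_zero j
  rw [hP.natDegree_mul' hQ] at hPQ
  exact coeff_eq_zero_of_natDegree_lt (by omega)

end Polynomial

section Nodes

variable {R : Type*} [CommRing R] {n : ℕ} (z : Fin n → R)

noncomputable def nodePoly : R[X] := ∏ s, (X - C (z s))

noncomputable def nodeCofactor (s : Fin n) : R[X] := ∏ r ∈ univ.erase s, (X - C (z r))

noncomputable def cofactorSum (e : Fin n → R) : R[X] := ∑ s, C (e s) * nodeCofactor z s

@[simp]
theorem cofactorSum_zero : cofactorSum z 0 = 0 := by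
  simp [cofactorSum]

theorem monic_nodePoly : (nodePoly z).Monic :=
  monic_prod_of_monic _ _ fun _ _ => monic_X_sub_C _

theorem natDegree_nodePoly [Nontrivial R] : (nodePoly z).natDegree = n := by
  simp [nodePoly]

theorem natDegree_nodeCofactor [Nontrivial R] (s : Fin n) :
    (nodeCofactor z s).natDegree = n - 1 := by
  simp [nodeCofactor]

theorem natDegree_cofactorSum_le [Nontrivial R] (e : Fin n → R) :
    (cofactorSum z e).natDegree ≤ n - 1 :=
  natDegree_sum_le_of_forall_le _ _ fun s _ =>
    (natDegree_C_mul_le _ _).trans (natDegree_nodeCofactor z s).le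

theorem X_sub_C_mul_nodeCofactor (s : Fin n) :
    (X - C (z s)) * nodeCofactor z s = nodePoly z :=
  mul_prod_erase univ (fun r => X - C (z r)) (mem_univ s)

theorem X_mul_cofactorSum (e : Fin n → R) :
    X * cofactorSum z e = C (∑ s, e s) * nodePoly z + cofactorSum z (fun s => z s * e s) := by
  simp only [cofactorSum, mul_sum, map_sum, sum_mul, ← sum_add_distrib, C_mul]
  refine sum_congr rfl fun s _ => ?_
  rw [← X_sub_C_mul_nodeCofactor z s]
  ring

theorem eval_nodeCofactor_of_ne {s t : Fin n} (h : t ≠ s) :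
    (nodeCofactor z s).eval (z t) = 0 := by
  simp only [nodeCofactor, eval_prod, eval_sub, eval_X, eval_C]
  exact prod_eq_zero (mem_erase.mpr ⟨h, mem_univ t⟩) (sub_self _)

theorem eval_cofactorSum (e : Fin n → R) (t : Fin n) :
    (cofactorSum z e).eval (z t) = e t * (nodeCofactor z t).eval (z t) := by
  simp only [cofactorSum, eval_finsetSum, eval_mul, eval_C]
  exact sum_eq_single t
    (fun s _ hst => by rw [eval_nodeCofactor_of_ne z (Ne.symm hst), mul_zero])
    (absurd (mem_univ t))

theorem nodePoly_mul_derivative_prod_pow (m : Fin n → ℕ) :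
    nodePoly z * derivative (∏ s, (X - C (z s)) ^ m s) =
      cofactorSum z (fun s => (m s : R)) * ∏ s, (X - C (z s)) ^ m s := by
  classical
  rw [derivative_prod_finset, mul_sum, cofactorSum, sum_mul]
  refine sum_congr rfl fun s _ => ?_
  rw [derivative_X_sub_C_pow, ← X_sub_C_mul_nodeCofactor z s,
    ← mul_prod_erase _ (fun s => (X - C (z s)) ^ m s) (mem_univ s)]
  rcases eq_or_ne (m s) 0 with hs | hs
  · simp [hs]
  rw [← mul_pow_sub_one hs (X - C (z s))]
  ring

variable [IsDomain R] {z}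

theorem eval_nodeCofactor_self_ne_zero (hz : Function.Injective z) (s : Fin n) :
    (nodeCofactor z s).eval (z s) ≠ 0 := by
  simp only [nodeCofactor, eval_prod, eval_sub, eval_X, eval_C]
  exact prod_ne_zero_iff.mpr fun r hr => sub_ne_zero.mpr fun h => ne_of_mem_erase hr (hz h.symm)

theorem cofactorSum_injective (hz : Function.Injective z) : Function.Injective (cofactorSum z) :=
  fun e e' h => funext fun t => mul_right_cancel₀ (eval_nodeCofactor_self_ne_zero hz t) <| by
    rw [← eval_cofactorSum, ← eval_cofactorSum, h]

end Nodes

theorem exists_cofactorSum_eq {K : Type*} [Field K] {n : ℕ} {z : Fin n → K}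
    (hz : Function.Injective z) {q : K[X]} (hq : q.natDegree < n) :
    ∃ e, cofactorSum z e = q := by
  refine ⟨fun s => q.eval (z s) / (nodeCofactor z s).eval (z s), ?_⟩
  refine eq_of_natDegree_lt_card_of_eval_eq _ _ hz (fun t => ?_) ?_
  · rw [eval_cofactorSum, div_mul_cancel₀ _ (eval_nodeCofactor_self_ne_zero hz t)]
  · have := natDegree_cofactorSum_le z (fun s => q.eval (z s) / (nodeCofactor z s).eval (z s))
    simp only [Fintype.card_fin]
    omega

theorem isCoprime_of_wronskian_eq {K : Type*} [Field K] [IsAlgClosed K] {n : ℕ} (z : Fin n → K)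
    (m : Fin n → ℕ) {f g : K[X]} {c : K} (hc : c ≠ 0)
    (hW : derivative f * g - f * derivative g = C c * ∏ s, (X - C (z s)) ^ m s)
    (hnv : ∀ s, f.eval (z s) ≠ 0 ∨ g.eval (z s) ≠ 0) : IsCoprime f g := by
  refine (isCoprime_iff_aeval_ne_zero_of_isAlgClosed K K f g).2 fun a => ?_
  simp only [coe_aeval_eq_eval]
  by_contra! ⟨hfa, hga⟩
  have hWa := congrArg (eval a) hW
  simp only [eval_sub, eval_mul, hfa, hga, mul_zero, zero_mul, sub_zero, eval_C, eval_prod,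
    eval_pow, eval_X] at hWa
  obtain ⟨s, -, hs⟩ := prod_eq_zero_iff.mp ((mul_eq_zero.mp hWa.symm).resolve_left hc)
  obtain rfl : a = z s := sub_eq_zero.mp (eq_zero_of_pow_eq_zero hs)
  exact (hnv s).elim (· hfa) (· hga)

section Heun

variable {n : ℕ} (z μ : Fin n → ℂ)

theorem Tpoly_eq (h : Fin n → ℂ) (p : ℂ[X]) :
    Tpoly z μ h p = nodePoly z * derivative (derivative p) - cofactorSum z μ * derivative p
      + cofactorSum z h * p := rfl

theorem Tpoly_eq_Tpoly_zero_add (h : Fin n → ℂ) (p : ℂ[X]) :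
    Tpoly z μ h p = Tpoly z μ 0 p + cofactorSum z h * p := by
  simp only [Tpoly_eq, cofactorSum_zero, zero_mul, add_zero]

theorem Tpoly_eq_zero_iff {p H : ℂ[X]} (hp : p ≠ 0) (hH : Tpoly z μ 0 p = p * H)
    (h : Fin n → ℂ) : Tpoly z μ h p = 0 ↔ cofactorSum z h = -H := by
  rw [Tpoly_eq_Tpoly_zero_add, hH, mul_comm (cofactorSum z h), ← mul_add, mul_eq_zero,
    or_iff_right hp, add_comm, add_eq_zero_iff_eq_neg]

theorem natDegree_Tpoly_lt (hn : 1 ≤ n) (h : Fin n → ℂ) (p : ℂ[X]) :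
    (Tpoly z μ h p).natDegree < n + p.natDegree := by
  rw [Tpoly_eq]
  have hA := natDegree_cofactorSum_le z μ
  have hB := natDegree_cofactorSum_le z h
  have hP := natDegree_nodePoly z
  rcases eq_or_ne p.natDegree 0 with hk | hk
  · simp only [derivative_of_natDegree_zero hk, derivative_zero, mul_zero, sub_zero, zero_add]
    exact natDegree_mul_le.trans_lt (by omega)
  have h1 := natDegree_derivative_lt hk
  have h2 := natDegree_derivative_le (derivative p)
  refine (natDegree_add_le _ _).trans_lt
    (max_lt ((natDegree_sub_le _ _).trans_lt (max_lt ?_ ?_)) ?_) <;>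
    exact natDegree_mul_le.trans_lt (by omega)

theorem Tpoly_zero_mul_comm_of_wronskian (m : Fin n → ℕ) {f g : ℂ[X]} {c : ℂ}
    (hW : derivative f * g - f * derivative g = C c * ∏ s, (X - C (z s)) ^ m s) :
    Tpoly z (fun s => (m s : ℂ)) 0 f * g = Tpoly z (fun s => (m s : ℂ)) 0 g * f := by
  have hW' := congrArg derivative hW
  simp only [derivative_sub, derivative_mul, derivative_C, zero_mul, zero_add] at hW'
  have hlog := nodePoly_mul_derivative_prod_pow z m
  simp only [Tpoly_eq, cofactorSum_zero, zero_mul, add_zero]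
  linear_combination nodePoly z * hW' - cofactorSum z (fun s => (m s : ℂ)) * hW + C c * hlog

theorem indicial_at_infinity_of_Tpoly_eq_zero (hn : 1 ≤ n) {h : Fin n → ℂ} {p : ℂ[X]}
    (hp : p.Monic) (hT : Tpoly z μ h p = 0) :
    ∑ s, h s = 0 ∧ (p.natDegree : ℂ) * (p.natDegree - 1) - (∑ s, μ s) * p.natDegree
      + ∑ s, z s * h s = 0 := by
  set k := p.natDegree
  -- `X · B_e = (∑ e) P + B_{z e}` puts `X² T_h p` in the form `P Q + R` with `deg R < n + k`,
  -- so the coefficients of `Q` from `k` on vanish.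
  set Q := X ^ 2 * derivative (derivative p) - C (∑ s, μ s) * (X * derivative p)
    + C (∑ s, h s) * (X * p) + C (∑ s, z s * h s) * p
  set R := cofactorSum z (fun s => z s * (z s * h s)) * p
    - cofactorSum z (fun s => z s * μ s) * (X * derivative p)
  have hsplit : nodePoly z * Q + R = X ^ 2 * Tpoly z μ h p := by
    rw [Tpoly_eq]
    linear_combination (X * derivative p) * X_mul_cofactorSum z μ
      - (X * p) * X_mul_cofactorSum z h - p * X_mul_cofactorSum z (fun s => z s * h s)
  have hXp' : (X * derivative p).natDegree ≤ k :=
    natDegree_le_iff_coeff_eq_zero.mpr fun j hj => by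
      rw [coeff_X_mul_derivative, coeff_eq_zero_of_natDegree_lt hj, mul_zero]
  have hR : R.natDegree < (nodePoly z).natDegree + k := by
    have := natDegree_cofactorSum_le z (fun s => z s * (z s * h s))
    have := natDegree_cofactorSum_le z (fun s => z s * μ s)
    rw [natDegree_nodePoly]
    refine (natDegree_sub_le _ _).trans_lt (max_lt ?_ ?_) <;>
      exact natDegree_mul_le.trans_lt (by omega)
  have hPQ : nodePoly z * Q = -R := by linear_combination hsplit + X ^ 2 * hT
  have hQ : ∀ j, k ≤ j → Q.coeff j = 0 := fun j hj =>
    (monic_nodePoly z).coeff_eq_zero_of_natDegree_mul_lt (by rwa [hPQ, natDegree_neg]) hj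
  have hpk : p.coeff k = 1 := hp.coeff_natDegree
  have hpk1 : p.coeff (k + 1) = 0 := coeff_eq_zero_of_natDegree_lt (Nat.lt_succ_self k)
  have hσ : ∑ s, h s = 0 := by
    have := hQ (k + 1) (Nat.le_succ k)
    simp only [Q, coeff_add, coeff_sub, coeff_C_mul, coeff_X_sq_mul_derivative_derivative,
      coeff_X_mul_derivative] at this
    rw [coeff_X_mul, hpk, hpk1] at this
    linear_combination this
  refine ⟨hσ, ?_⟩
  have := hQ k le_rfl
  simp only [Q, coeff_add, coeff_sub, coeff_C_mul, coeff_X_sq_mul_derivative_derivative,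
    coeff_X_mul_derivative, hσ, hpk] at this
  linear_combination this

end Heun

theorem statement_16_general {n : ℕ} (hn : 1 ≤ n) (z : Fin n → ℂ) (hz : Function.Injective z)
    (m : Fin n → ℕ) (lt l : ℕ) (hll : l < lt)
    (f g : Polynomial ℂ) (hf : f.Monic) (hg : g.Monic)
    (hdf : f.natDegree = lt) (hdg : g.natDegree = l)
    (hnv : ∀ s, f.eval (z s) ≠ 0 ∨ g.eval (z s) ≠ 0)
    (hWr : Polynomial.derivative f * g - f * Polynomial.derivative g =
      Polynomial.C ((lt : ℂ) - l) * ∏ s, (Polynomial.X - Polynomial.C (z s)) ^ m s) :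
    (∃! h : Fin n → ℂ,
      Tpoly z (fun s => (m s : ℂ)) h f = 0 ∧ Tpoly z (fun s => (m s : ℂ)) h g = 0) ∧
    (∀ h : Fin n → ℂ,
      Tpoly z (fun s => (m s : ℂ)) h f = 0 → Tpoly z (fun s => (m s : ℂ)) h g = 0 →
      (∑ s, h s = 0) ∧ ∑ s, z s * h s = (l : ℂ) * (lt : ℂ)) := by
  set μ : Fin n → ℂ := fun s => (m s : ℂ)
  have hc : (lt : ℂ) - l ≠ 0 := sub_ne_zero.mpr (by exact_mod_cast hll.ne')
  have hcomm := Tpoly_zero_mul_comm_of_wronskian z m hWr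
  obtain ⟨H, hH⟩ : f ∣ Tpoly z μ 0 f :=
    (isCoprime_of_wronskian_eq z m hc hWr hnv).dvd_of_dvd_mul_right
      ⟨_, hcomm.trans (mul_comm _ _)⟩
  have hHg : Tpoly z μ 0 g = g * H :=
    mul_left_cancel₀ hf.ne_zero (by linear_combination -hcomm + g * hH)
  have hH_lt : H.natDegree < n := by
    rcases eq_or_ne H 0 with rfl | hH0
    · rwa [natDegree_zero]
    have := natDegree_Tpoly_lt z μ hn 0 f
    rw [hH, hf.natDegree_mul' hH0] at this
    omega
  have hf_iff := Tpoly_eq_zero_iff z μ hf.ne_zero hH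
  have hg_iff := Tpoly_eq_zero_iff z μ hg.ne_zero hHg
  obtain ⟨h₀, hh₀⟩ := exists_cofactorSum_eq hz (q := -H) (by rwa [natDegree_neg])
  refine ⟨⟨h₀, ⟨(hf_iff h₀).2 hh₀, (hg_iff h₀).2 hh₀⟩, fun h ⟨hfh, _⟩ =>
    cofactorSum_injective hz (((hf_iff h).1 hfh).trans hh₀.symm)⟩, fun h hfh hgh => ?_⟩
  obtain ⟨hσ, hf_ind⟩ := indicial_at_infinity_of_Tpoly_eq_zero z μ hn hf hfh
  obtain ⟨-, hg_ind⟩ := indicial_at_infinity_of_Tpoly_eq_zero z μ hn hg hgh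
  rw [hdf] at hf_ind
  rw [hdg] at hg_ind
  have hM : ∑ s, μ s = lt + l - 1 :=
    mul_left_cancel₀ hc (by linear_combination hg_ind - hf_ind)
  exact ⟨hσ, by linear_combination hf_ind + lt * hM⟩

theorem statement_16 {n : ℕ} (hn : 1 ≤ n) (z : Fin n → ℂ) (hz : Function.Injective z)
    (m : Fin n → ℕ) (hm : ∀ s, 0 < m s) (lt l : ℕ) (hll : l < lt)
    (f g : Polynomial ℂ) (hf : f.Monic) (hg : g.Monic)
    (hdf : f.natDegree = lt) (hdg : g.natDegree = l)
    (hnv : ∀ s, f.eval (z s) ≠ 0 ∨ g.eval (z s) ≠ 0)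
    (hWr : Polynomial.derivative f * g - f * Polynomial.derivative g =
      Polynomial.C ((lt : ℂ) - l) * ∏ s, (Polynomial.X - Polynomial.C (z s)) ^ m s) :
    (∃! h : Fin n → ℂ,
      Tpoly z (fun s => (m s : ℂ)) h f = 0 ∧ Tpoly z (fun s => (m s : ℂ)) h g = 0) ∧
    (∀ h : Fin n → ℂ,
      Tpoly z (fun s => (m s : ℂ)) h f = 0 → Tpoly z (fun s => (m s : ℂ)) h g = 0 →
      (∑ s, h s = 0) ∧ ∑ s, z s * h s = (l : ℂ) * (lt : ℂ)) :=
  statement_16_general hn z hz m lt l hll f g hf hg hdf hdg hnv hWr
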